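/- Let J be a finite nilpotent group acting by automorphisms on a finite q-group N_q, where q divides |J|. Write J = J_q × J'_q with J_q the Sylow q-subgroup and J'_q the Hall q'-subgroup. Then the restriction map res : H¹(J, N_q) → H¹(J_q, N_q) is injective, with image the set of J'_q-invariant classes H¹(J_q, N_q)^{J'_q}. -/

import Mathlib

section

variable {N J : Type*} [Group N] [Group J] (φ : J →* MulAut N)

/-- Crossed homomorphisms `J → N`. -/
def CrossedHom : Type _ := {f : J → N // ∀ j j', f (j * j') = f j * φ j (f j')}

/-- The cohomology relation on crossed homomorphisms (on raw functions). -/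
def Cohomologous (f g : J → N) : Prop :=
  ∃ n : N, ∀ j, g j = n⁻¹ * f j * φ j n

/-- The cohomology relation on crossed homomorphisms. -/
def cohRel (f g : CrossedHom φ) : Prop := Cohomologous φ f.1 g.1

end

/-!
Injectivity is proved by twisting: if two crossed homomorphisms on `J = J_q × J'_q` have
cohomologous restrictions to `J_q`, then after normalising, their quotient is a crossed
homomorphism for the twisted action that vanishes on `J_q`. Its values on `J'_q` are then fixed
by `J_q`, and it is trivialised by the coprime vanishing of `H¹(J'_q, -)` on `q`-groups (averaging
in the abelian case, induction through the centre in general).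

For the image, let `g` be a `J'_q`-invariant crossed homomorphism on `J_q`. The elements of
`N ⋊ J` lying over `1 × J'_q` and centralising the graph of `g` map onto `J'_q` (this is the
invariance), with kernel inside `N`. A Schur–Zassenhaus complement is then a homomorphic section,
and its product with the graph of `g` is the graph of an extension of `g` to `J`.
-/

section CrossedHoms

variable {J K N : Type*} [Group J] [Group K] [Group N] {φ : J →* MulAut N} {f g h : J → N}

def IsCrossedHom (φ : J →* MulAut N) (f : J → N) : Prop :=
  ∀ j j', f (j * j') = f j * φ j (f j')

theorem CrossedHom.isCrossedHom (f : CrossedHom φ) : IsCrossedHom φ f.1 := f.2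

namespace Cohomologous

variable (φ) in
theorem refl (f : J → N) : Cohomologous φ f f := ⟨1, fun j => by simp⟩

theorem symm (hfg : Cohomologous φ f g) : Cohomologous φ g f := by
  obtain ⟨n, hn⟩ := hfg
  exact ⟨n⁻¹, fun j => by rw [hn j, map_inv]; group⟩

theorem trans (hfg : Cohomologous φ f g) (hgh : Cohomologous φ g h) :
    Cohomologous φ f h := by
  obtain ⟨n, hn⟩ := hfg
  obtain ⟨m, hm⟩ := hgh
  exact ⟨n * m, fun j => by rw [hm j, hn j, map_mul, mul_inv_rev]; group⟩

variable (φ) in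
theorem equivalence : Equivalence (Cohomologous φ) := ⟨refl φ, symm, trans⟩

theorem map_mulAut {α : MulAut N} (hα : ∀ j, Commute α (φ j)) (hfg : Cohomologous φ f g) :
    Cohomologous φ (α ∘ f) (α ∘ g) := by
  obtain ⟨n, hn⟩ := hfg
  refine ⟨α n, fun j => ?_⟩
  simp only [Function.comp_apply, hn j, map_mul, map_inv, ← MulAut.mul_apply, (hα j).eq]

end Cohomologous

theorem quot_mk_cohRel_eq_iff {f g : CrossedHom φ} :
    Quot.mk (cohRel φ) f = Quot.mk _ g ↔ Cohomologous φ f.1 g.1 :=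
  ⟨fun hfg => ((Cohomologous.equivalence φ).comap Subtype.val).eqvGen_iff.mp (Quot.eq.mp hfg),
    fun hfg => Quot.sound hfg⟩

theorem IsCrossedHom.comp (hf : IsCrossedHom φ f) (ι : K →* J) :
    IsCrossedHom (φ.comp ι) (f ∘ ι) := fun x y => by
  simp only [Function.comp_apply, map_mul, MonoidHom.comp_apply]
  exact hf _ _

theorem IsCrossedHom.of_cohomologous (hf : IsCrossedHom φ f) (hfg : Cohomologous φ f g) :
    IsCrossedHom φ g := by
  obtain ⟨n, hn⟩ := hfg
  intro j j'
  simp only [hn, hf j j', map_mul, map_inv, MulAut.mul_apply]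
  group

def twist (φ : J →* MulAut N) (f : J → N) (hf : IsCrossedHom φ f) : J →* MulAut N :=
  MonoidHom.mk' (fun j => MulAut.conj (f j) * φ j) fun j j' => by
    ext n
    simp only [MulAut.mul_apply, MulAut.conj_apply, hf j j', map_mul, map_inv]

@[simp] theorem twist_apply (hf : IsCrossedHom φ f) (j : J) (n : N) :
    twist φ f hf j n = f j * φ j n * (f j)⁻¹ := rfl

theorem IsCrossedHom.div_twist (hf : IsCrossedHom φ f) (hg : IsCrossedHom φ g) :
    IsCrossedHom (twist φ f hf) (fun j => g j * (f j)⁻¹) := by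
  intro j j'
  simp only [twist_apply, hf j j', hg j j', map_mul, map_inv]
  group

theorem cohomologous_iff_twist (hf : IsCrossedHom φ f) :
    Cohomologous φ f g ↔ Cohomologous (twist φ f hf) 1 (fun j => g j * (f j)⁻¹) := by
  refine exists_congr fun n => forall_congr' fun j => ?_
  simp only [twist_apply, Pi.one_apply, mul_one]
  constructor <;> intro h
  · rw [h]; group
  · rw [mul_inv_eq_iff_eq_mul.mp h]; group

end CrossedHoms

section CoprimeAction

variable {B M : Type*} [Group B]

def MonoidHom.restrictMulAut [Group M] (ψ : B →* MulAut M) (H : Subgroup M)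
    (hH : ∀ b, ∀ x ∈ H, ψ b x ∈ H) : B →* MulAut H where
  toFun b :=
    { toFun := fun x => ⟨ψ b x, hH b x x.2⟩
      invFun := fun x => ⟨ψ b⁻¹ x, hH b⁻¹ x x.2⟩
      left_inv := fun x => Subtype.ext <| by
        simp only [← MulAut.mul_apply, ← map_mul, inv_mul_cancel, map_one, MulAut.one_apply]
      right_inv := fun x => Subtype.ext <| by
        simp only [← MulAut.mul_apply, ← map_mul, mul_inv_cancel, map_one, MulAut.one_apply]
      map_mul' := fun x y => Subtype.ext <| map_mul (ψ b) (x : M) y }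
  map_one' := by ext; simp
  map_mul' a b := by ext; simp

@[simp] theorem MonoidHom.coe_restrictMulAut_apply [Group M] (ψ : B →* MulAut M)
    (H : Subgroup M) (hH : ∀ b, ∀ x ∈ H, ψ b x ∈ H) (b : B) (x : H) :
    (ψ.restrictMulAut H hH b x : M) = ψ b x := rfl

def MulAut.quotientCharacteristic [Group M] (H : Subgroup M) [H.Characteristic] :
    MulAut M →* MulAut (M ⧸ H) where
  toFun e := QuotientGroup.congr H H e (Subgroup.characteristic_iff_map_eq.mp inferInstance e)
  map_one' := by ext x; induction x using QuotientGroup.induction_on; rfl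
  map_mul' e e' := by ext x; induction x using QuotientGroup.induction_on; rfl

@[simp] theorem MulAut.quotientCharacteristic_apply_mk [Group M] (H : Subgroup M)
    [H.Characteristic] (e : MulAut M) (x : M) :
    MulAut.quotientCharacteristic H e (x : M ⧸ H) = (e x : M ⧸ H) := rfl

section

variable [Group M] {ψ : B →* MulAut M} {r : B → M}

theorem IsCrossedHom.codRestrict (hr : IsCrossedHom ψ r) {H : Subgroup M}
    (hH : ∀ b, ∀ x ∈ H, ψ b x ∈ H) (hrH : ∀ b, r b ∈ H) :
    IsCrossedHom (ψ.restrictMulAut H hH) (fun b => ⟨r b, hrH b⟩) :=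
  fun a b => Subtype.ext (hr a b)

theorem exists_mem_of_cohomologous_restrictMulAut {H : Subgroup M}
    {hH : ∀ b, ∀ x ∈ H, ψ b x ∈ H} {r : B → H}
    (h : Cohomologous (ψ.restrictMulAut H hH) 1 r) :
    ∃ n ∈ H, ∀ b, (r b : M) = n⁻¹ * ψ b n := by
  obtain ⟨n, hn⟩ := h
  exact ⟨n, n.2, fun b => by simpa using congrArg Subtype.val (hn b)⟩

theorem IsCrossedHom.mk_quotient (hr : IsCrossedHom ψ r) (H : Subgroup M) [H.Characteristic] :
    IsCrossedHom ((MulAut.quotientCharacteristic H).comp ψ) (fun b => (r b : M ⧸ H)) :=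
  fun a b => by simp [hr a b]

end

/-- Averaging over `B`: `P = ∏ b, r b` satisfies `r a ^ |B| = P * (ψ a P)⁻¹`, so a `|B|`-th
root of `P` trivialises `r`. -/
theorem IsCrossedHom.cohomologous_one_of_commGroup [Finite B] [CommGroup M] {q : ℕ}
    (hM : IsPGroup q M) (hB : q.Coprime (Nat.card B)) {ψ : B →* MulAut M} {r : B → M}
    (hr : IsCrossedHom ψ r) : Cohomologous ψ 1 r := by
  have := Fintype.ofFinite B
  set P := ∏ b, r b
  have hP (a : B) : r a ^ Nat.card B * ψ a P = P := by
    calc r a ^ Nat.card B * ψ a P = ∏ b, r (a * b) := by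
          simp [P, hr a, Finset.prod_mul_distrib, map_prod, Nat.card_eq_fintype_card]
      _ = P := Fintype.prod_equiv (Equiv.mulLeft a) _ _ fun _ => rfl
  set u := (hM.powEquiv hB).symm P
  have hu : u ^ Nat.card B = P := (hM.powEquiv hB).apply_symm_apply P
  refine ⟨u⁻¹, fun a => (hM.powEquiv hB).injective ?_⟩
  simp only [IsPGroup.powEquiv_apply, Pi.one_apply, mul_one, inv_inv, map_inv, mul_pow, inv_pow,
    ← map_pow, hu]
  exact eq_mul_inv_of_mul_eq (hP a)

end CoprimeAction

theorem IsCrossedHom.cohomologous_one_of_coprime {B M : Type*} [Group B] [Finite B] [Group M]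
    [Finite M] {q : ℕ} [Fact q.Prime] (hM : IsPGroup q M) (hB : q.Coprime (Nat.card B))
    {ψ : B →* MulAut M} {r : B → M} (hr : IsCrossedHom ψ r) : Cohomologous ψ 1 r := by
  rcases subsingleton_or_nontrivial M with _ | _
  · exact ⟨1, fun _ => Subsingleton.elim _ _⟩
  set Z := Subgroup.center M
  have hZ : ∀ b, ∀ x ∈ Z, ψ b x ∈ Z := fun b x hx =>
    Subgroup.characteristic_iff_le_comap.mp inferInstance (ψ b) hx
  have hcard : Nat.card (M ⧸ Z) < Nat.card M := by
    rw [Subgroup.card_eq_card_quotient_mul_card_subgroup Z]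
    exact lt_mul_of_one_lt_right Nat.card_pos
      (Finite.one_lt_card_iff_nontrivial.mpr hM.center_nontrivial)
  obtain ⟨n, hn⟩ := (hr.mk_quotient Z).cohomologous_one_of_coprime (hM.to_quotient Z) hB
  obtain ⟨n, rfl⟩ := QuotientGroup.mk_surjective n
  set r' := fun b => n * r b * (ψ b n)⁻¹
  have hrr' : Cohomologous ψ r r' := ⟨n⁻¹, fun b => by simp [r']⟩
  have hr'Z (b : B) : r' b ∈ Z := by
    rw [← QuotientGroup.eq_one_iff]
    simp [r', hn b]
  open scoped IsMulCommutative in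
  obtain ⟨m, -, hm⟩ := exists_mem_of_cohomologous_restrictMulAut
    (((hr.of_cohomologous hrr').codRestrict hZ hr'Z).cohomologous_one_of_commGroup
      (hM.to_subgroup Z) hB)
  exact Cohomologous.trans ⟨m, by simpa using hm⟩ hrr'.symm
termination_by Nat.card M

section Product

variable {A B N : Type*} [Group A] [Group B] [Group N]

def MonoidHom.fixedSubgroup (ψ : A →* MulAut N) : Subgroup N where
  carrier := {n | ∀ a, ψ a n = n}
  one_mem' _ := map_one _
  mul_mem' ha hb a := by simp only [map_mul, ha a, hb a]
  inv_mem' ha a := by simp only [map_inv, ha a]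

variable {φ : A × B →* MulAut N} {f g : A × B → N}

theorem IsCrossedHom.apply_mk (hf : IsCrossedHom φ f) (a : A) (b : B) :
    f (a, b) = f (a, 1) * φ (a, 1) (f (1, b)) := by
  rw [← hf, Prod.mk_mul_mk, mul_one, one_mul]

theorem IsCrossedHom.apply_mk' (hf : IsCrossedHom φ f) (a : A) (b : B) :
    f (a, b) = f (1, b) * φ (1, b) (f (a, 1)) := by
  rw [← hf, Prod.mk_mul_mk, mul_one, one_mul]

theorem IsCrossedHom.restrict_inl_invariant (hf : IsCrossedHom φ f) (b : B) :
    Cohomologous (φ.comp (MonoidHom.inl A B)) (fun a => φ (1, b) (f (a, 1)))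
      (fun a => f (a, 1)) := by
  refine ⟨(f (1, b))⁻¹, fun a => ?_⟩
  rw [inv_inv, MonoidHom.comp_apply, MonoidHom.inl_apply, map_inv,
    ← hf.apply_mk', hf.apply_mk, mul_inv_cancel_right]

variable [Finite B] [Finite N] {q : ℕ} [Fact q.Prime] (hN : IsPGroup q N)
  (hB : q.Coprime (Nat.card B))
include hN hB

theorem IsCrossedHom.cohomologous_one_of_apply_inl_eq_one (hf : IsCrossedHom φ f)
    (hf1 : ∀ a, f (a, 1) = 1) : Cohomologous φ 1 f := by
  set C := (φ.comp (MonoidHom.inl A B)).fixedSubgroup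
  have hC : ∀ b, ∀ x ∈ C, φ.comp (MonoidHom.inr A B) b x ∈ C := fun b x hx a =>
    calc φ (a, 1) (φ (1, b) x) = (φ (1, b) * φ (a, 1)) x :=
          congrArg (· x) ((MonoidHom.commute_inl_inr a b).map φ).eq
      _ = φ (1, b) x := congrArg (φ (1, b)) (hx a)
  have hfC (b : B) : (f ∘ MonoidHom.inr A B) b ∈ C := fun a => by
    have h := (hf.apply_mk a b).symm.trans (hf.apply_mk' a b)
    rw [hf1, one_mul, map_one, mul_one] at h
    exact h
  obtain ⟨n, hnC, hn⟩ := exists_mem_of_cohomologous_restrictMulAut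
    (((hf.comp _).codRestrict hC hfC).cohomologous_one_of_coprime (hN.to_subgroup C) hB)
  refine ⟨n, fun ⟨a, b⟩ => ?_⟩
  have hnb := hn b
  simp only [MonoidHom.comp_apply, MonoidHom.inr_apply, Function.comp_apply] at hnb
  rw [hf.apply_mk, hf1, hnb, one_mul, map_mul, map_inv, show φ (a, 1) n = n from hnC a,
    ← MulAut.mul_apply, ← map_mul]
  simp

theorem IsCrossedHom.cohomologous_one_of_comp_inl (hf : IsCrossedHom φ f)
    (h : Cohomologous (φ.comp (MonoidHom.inl A B)) 1 (f ∘ MonoidHom.inl A B)) :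
    Cohomologous φ 1 f := by
  obtain ⟨n, hn⟩ := h
  set f' := fun j => n * f j * (φ j n)⁻¹
  have hff' : Cohomologous φ f f' := ⟨n⁻¹, fun j => by simp [f']⟩
  have hf'1 (a : A) : f' (a, 1) = 1 := by
    have := hn a
    simp only [Function.comp_apply, MonoidHom.inl_apply, Pi.one_apply, mul_one,
      MonoidHom.comp_apply] at this
    simp [f', this]
  exact ((hf.of_cohomologous hff').cohomologous_one_of_apply_inl_eq_one hN hB hf'1).trans hff'.symm

theorem Cohomologous.of_comp_inl (hf : IsCrossedHom φ f) (hg : IsCrossedHom φ g)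
    (h : Cohomologous (φ.comp (MonoidHom.inl A B)) (f ∘ MonoidHom.inl A B)
      (g ∘ MonoidHom.inl A B)) :
    Cohomologous φ f g := by
  rw [cohomologous_iff_twist (hf.comp _)] at h
  rw [cohomologous_iff_twist hf]
  exact (hf.div_twist hg).cohomologous_one_of_comp_inl hN hB h

end Product

theorem MonoidHom.exists_rightInverse_of_coprime {E B : Type*} [Group E] [Group B] (σ : E →* B)
    (hσ : Function.Surjective σ) (hcop : (Nat.card σ.ker).Coprime (Nat.card B)) :
    ∃ w : B →* E, ∀ b, σ (w b) = b := by
  have hidx : σ.ker.index = Nat.card B := by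
    rw [Subgroup.index_ker, σ.range_eq_top.mpr hσ, Subgroup.card_top]
  obtain ⟨D, hD⟩ := Subgroup.exists_right_complement'_of_coprime (hidx ▸ hcop)
  let e := (QuotientGroup.quotientKerEquivOfSurjective σ hσ).symm.trans hD.symm.QuotientMulEquiv
  refine ⟨D.subtype.comp e.toMonoidHom, fun b => ?_⟩
  calc σ (e b) = QuotientGroup.quotientKerEquivOfSurjective σ hσ
        (hD.symm.QuotientMulEquiv.symm (e b)) := by
        rw [Subgroup.IsComplement'.QuotientMulEquiv_symm_apply]; rfl
    _ = b := by simp [e]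

section Semidirect

variable {J K N : Type*} [Group J] [Group K] [Group N] {φ : J →* MulAut N}

theorem isCrossedHom_left_of_right_eq {s : J →* N ⋊[φ] J} (hs : ∀ j, (s j).right = j) :
    IsCrossedHom φ (fun j => (s j).left) := fun j j' => by
  simp only [map_mul, SemidirectProduct.mul_left, hs]

def IsCrossedHom.toSemidirectProduct {ι : K →* J} {g : K → N}
    (hg : IsCrossedHom (φ.comp ι) g) : K →* N ⋊[φ] J :=
  MonoidHom.mk' (fun k => ⟨g k, ι k⟩) fun k k' =>
    SemidirectProduct.ext (hg k k') (map_mul ι k k')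

@[simp] theorem IsCrossedHom.toSemidirectProduct_apply {ι : K →* J} {g : K → N}
    (hg : IsCrossedHom (φ.comp ι) g) (k : K) : hg.toSemidirectProduct k = ⟨g k, ι k⟩ := rfl

end Semidirect

section Extension

variable {A B N : Type*} [Group A] [Group B] [Group N] {φ : A × B →* MulAut N}

theorem IsCrossedHom.exists_extension_of_commute {g : A → N}
    (hg : IsCrossedHom (φ.comp (MonoidHom.inl A B)) g) (w : B →* N ⋊[φ] (A × B))
    (hw : ∀ b, (w b).right = (1, b)) (hcomm : ∀ a b, Commute (hg.toSemidirectProduct a) (w b)) :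
    ∃ f : A × B → N, IsCrossedHom φ f ∧ ∀ a, f (a, 1) = g a := by
  let Φ := hg.toSemidirectProduct.noncommCoprod w hcomm
  have hΦ_apply (j : A × B) : Φ j = hg.toSemidirectProduct j.1 * w j.2 := rfl
  have hΦ (j : A × B) : (Φ j).right = j := by
    rw [hΦ_apply, SemidirectProduct.mul_right, hw]
    simp
  exact ⟨fun j => (Φ j).left, isCrossedHom_left_of_right_eq hΦ, fun a => by simp [hΦ_apply]⟩

theorem IsCrossedHom.exists_extension [Finite N] (hcop : (Nat.card N).Coprime (Nat.card B))
    {g : A → N} (hg : IsCrossedHom (φ.comp (MonoidHom.inl A B)) g)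
    (hinv : ∀ b : B, Cohomologous (φ.comp (MonoidHom.inl A B)) (fun a => φ (1, b) (g a)) g) :
    ∃ f : A × B → N, IsCrossedHom φ f ∧ ∀ a, f (a, 1) = g a := by
  set κ := hg.toSemidirectProduct
  set E := Subgroup.centralizer (κ.range : Set (N ⋊[φ] (A × B))) ⊓
    ((MonoidHom.fst A B).comp SemidirectProduct.rightHom).ker
  set σ : E →* B := (MonoidHom.snd A B).comp (SemidirectProduct.rightHom.comp E.subtype)
  have hσ : Function.Surjective σ := by
    intro b
    obtain ⟨n, hn⟩ := hinv b
    refine ⟨⟨⟨n⁻¹, (1, b)⟩, Subgroup.mem_centralizer_iff.mpr ?_, rfl⟩, rfl⟩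
    rintro _ ⟨a, rfl⟩
    refine SemidirectProduct.ext ?_ (MonoidHom.commute_inl_inr a b)
    have := hn a
    simp only [MonoidHom.comp_apply, MonoidHom.inl_apply] at this
    simp only [κ, toSemidirectProduct_apply, MonoidHom.inl_apply, SemidirectProduct.mul_left,
      map_inv]
    exact mul_inv_eq_of_eq_mul this
  have hker : Nat.card σ.ker ∣ Nat.card N := by
    calc Nat.card σ.ker = Nat.card (σ.ker.map E.subtype) :=
          (Subgroup.card_map_of_injective E.subtype_injective).symm
      _ ∣ Nat.card (SemidirectProduct.rightHom : N ⋊[φ] (A × B) →* _).ker := by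
          refine Subgroup.card_dvd_of_le ?_
          rintro _ ⟨s, hs, rfl⟩
          exact Prod.ext s.2.2 hs
      _ = Nat.card N := by
          rw [← SemidirectProduct.range_inl_eq_ker_rightHom]
          exact Nat.card_congr
            (MonoidHom.ofInjective SemidirectProduct.inl_injective).toEquiv.symm
  obtain ⟨w, hw⟩ := σ.exists_rightInverse_of_coprime hσ (hcop.coprime_dvd_left hker)
  exact hg.exists_extension_of_commute (E.subtype.comp w) (fun b => Prod.ext (w b).2.2 (hw b))
    fun a b => Subgroup.mem_centralizer_iff.mp (w b).2.1 _ ⟨a, rfl⟩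

end Extension

section Restriction

variable {J K N : Type*} [Group J] [Group K] [Group N] {φ : J →* MulAut N}

def CrossedHom.comp (f : CrossedHom φ) (ι : K →* J) : CrossedHom (φ.comp ι) :=
  ⟨f.1 ∘ ι, f.isCrossedHom.comp ι⟩

variable (φ) in
def cohomologyRestrict (ι : K →* J) : Quot (cohRel φ) → Quot (cohRel (φ.comp ι)) :=
  Quot.map (CrossedHom.comp · ι) fun _ _ ⟨n, hn⟩ => ⟨n, fun k => hn (ι k)⟩

end Restriction

theorem stmt_8_general {Jq Jq' N : Type*} [Group Jq] [Group Jq'] [Group N]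
    [Finite Jq'] [Finite N]
    (q : ℕ) (hq : q.Prime) (hJq' : ¬ q ∣ Nat.card Jq')
    (hN : IsPGroup q N)
    (φ : Jq × Jq' →* MulAut N) :
    ∃ res : Quot (cohRel φ) → Quot (cohRel (φ.comp (MonoidHom.inl Jq Jq'))),
      (∀ (f : CrossedHom φ) (g : CrossedHom (φ.comp (MonoidHom.inl Jq Jq'))),
        (∀ x : Jq, g.1 x = f.1 (x, 1)) →
        res (Quot.mk _ f) = Quot.mk _ g) ∧
      Function.Injective res ∧
      Set.range res = {c | ∀ g : CrossedHom (φ.comp (MonoidHom.inl Jq Jq')),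
        Quot.mk _ g = c → ∀ j' : Jq',
          Cohomologous (φ.comp (MonoidHom.inl Jq Jq'))
            (fun x => φ (1, j') (g.1 x)) g.1} := by
  have : Fact q.Prime := ⟨hq⟩
  have hB : q.Coprime (Nat.card Jq') := hq.coprime_iff_not_dvd.mpr hJq'
  have hcop : (Nat.card N).Coprime (Nat.card Jq') := by
    obtain ⟨k, hk⟩ := hN.exists_card_eq
    exact hk ▸ hB.pow_left k
  refine ⟨cohomologyRestrict φ (MonoidHom.inl Jq Jq'), fun f g hfg => ?_, ?_, ?_⟩
  · exact congrArg (Quot.mk _) (Subtype.ext (funext fun x => (hfg x).symm))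
  · rintro ⟨f⟩ ⟨g⟩ hfg
    exact Quot.sound <| Cohomologous.of_comp_inl hN hB f.isCrossedHom g.isCrossedHom
      (quot_mk_cohRel_eq_iff.mp hfg)
  ext c
  refine ⟨?_, fun hc => ?_⟩
  · rintro ⟨⟨f⟩, rfl⟩ g hg b
    have hfg := quot_mk_cohRel_eq_iff.mp hg.symm
    have hb (a : Jq) : Commute (φ (1, b)) (φ.comp (MonoidHom.inl Jq Jq') a) :=
      (MonoidHom.commute_inl_inr a b).symm.map φ
    exact (hfg.symm.map_mulAut hb).trans ((f.isCrossedHom.restrict_inl_invariant b).trans hfg)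
  · obtain ⟨g, rfl⟩ := Quot.exists_rep c
    obtain ⟨f, hf, hfg⟩ := g.isCrossedHom.exists_extension hcop (hc g rfl)
    exact ⟨Quot.mk _ ⟨f, hf⟩, congrArg (Quot.mk _) (Subtype.ext (funext hfg))⟩

/-- For nilpotent `J = J_q × J'_q` (`J_q` a `q`-group, `J'_q` a nilpotent `q'`-group)
acting on a finite `q`-group `N`, with `q` prime dividing `|J|`, the restriction map
`res : H¹(J, N) → H¹(J_q, N)` is injective with image exactly the `J'_q`-invariant
classes `H¹(J_q, N)^{J'_q}`. -/
theorem stmt_8 {Jq Jq' N : Type*} [Group Jq] [Group Jq'] [Group N]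
    [Finite Jq] [Finite Jq'] [Finite N]
    (q : ℕ) (hq : q.Prime) (hJq : IsPGroup q Jq) (hJq' : ¬ q ∣ Nat.card Jq')
    [Group.IsNilpotent Jq'] (hN : IsPGroup q N)
    (hdvd : q ∣ Nat.card (Jq × Jq'))
    (φ : Jq × Jq' →* MulAut N) :
    ∃ res : Quot (cohRel φ) → Quot (cohRel (φ.comp (MonoidHom.inl Jq Jq'))),
      (∀ (f : CrossedHom φ) (g : CrossedHom (φ.comp (MonoidHom.inl Jq Jq'))),
        (∀ x : Jq, g.1 x = f.1 (x, 1)) →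
        res (Quot.mk _ f) = Quot.mk _ g) ∧
      Function.Injective res ∧
      Set.range res = {c | ∀ g : CrossedHom (φ.comp (MonoidHom.inl Jq Jq')),
        Quot.mk _ g = c → ∀ j' : Jq',
          Cohomologous (φ.comp (MonoidHom.inl Jq Jq'))
            (fun x => φ (1, j') (g.1 x)) g.1} :=
  stmt_8_general q hq hJq' hN φ
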